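/- arXiv:2310.11745 — 2 statements merged into one kernel-verified Lean document; each statement's English description precedes it below -/
import Mathlib

section
/- Let R > 0, T_c > 0 and C₀ ≥ 1. There exist ε₁* > 0 and, for each ε₁ ∈ (0, ε₁*], a constant C(ε₁) > 0 such that: whenever ρ > 0, u ∈ ℝ³, T > 0 satisfy |ρ − 1| ≤ ε₁, |u| ≤ ε₁ and ε₁/C₀ ≤ T − T_c ≤ C₀ε₁, then for every v ∈ ℝ³, M_{[ρ,u,T]}(v)^{−1/2}·μ(v)^{1/2} ≤ C(ε₁)·exp(−ε₁|v|²/(16 C₀ R T_c²)). -/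
open MeasureTheory Real

noncomputable section

/-- Velocity space `ℝ³`. -/
abbrev E3 : Type := EuclideanSpace ℝ (Fin 3)
/-- Local Maxwellian `M_{[ρ,u,T]}(v) = (ρ/(2πRT)^{3/2}) exp(-|v-u|²/(2RT))`. -/
def maxwellian (R ρ T : ℝ) (u : E3) (v : E3) : ℝ :=
  ρ / (2 * π * R * T) ^ ((3 : ℝ) / 2) * Real.exp (-‖v - u‖ ^ 2 / (2 * R * T))
/-- Global Maxwellian `μ(v) = (2πRT_c)^{-3/2} exp(-|v|²/(2RT_c))`. -/
def muG (R Tc : ℝ) (v : E3) : ℝ :=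
  (2 * π * R * Tc) ^ (-(3 : ℝ) / 2) * Real.exp (-‖v‖ ^ 2 / (2 * R * Tc))

set_option maxHeartbeats 800000 in
/-- Gaussian-ratio bound: `M^{-1/2}μ^{1/2} ≤ C(ε₁) exp(-ε₁|v|²/(16C₀RT_c²))` when the
fluid temperature `T` exceeds `T_c` by an amount comparable to `ε₁`. -/
theorem maxwellian_ratio_bound (R Tc C₀ : ℝ) (hR : 0 < R) (hTc : 0 < Tc) (hC₀ : 1 ≤ C₀) :
    ∃ εs > 0, ∀ ε₁ : ℝ, 0 < ε₁ → ε₁ ≤ εs → ∃ C > 0,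
      ∀ (ρ T : ℝ) (u : E3), 0 < ρ → 0 < T →
        |ρ - 1| ≤ ε₁ → ‖u‖ ≤ ε₁ → ε₁ / C₀ ≤ T - Tc → T - Tc ≤ C₀ * ε₁ →
        ∀ v : E3,
          (maxwellian R ρ T u v) ^ (-(1 : ℝ) / 2) * (muG R Tc v) ^ ((1 : ℝ) / 2)
            ≤ C * Real.exp (-(ε₁ * ‖v‖ ^ 2) / (16 * C₀ * R * Tc ^ 2)) := by
  have hC₀0 : (0:ℝ) < C₀ := lt_of_lt_of_le one_pos hC₀
  refine ⟨min (Tc / C₀) (1/2), by positivity, ?_⟩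
  intro ε₁ hε₁ hε₁le
  have hεTc : ε₁ * C₀ ≤ Tc := by
    have h := le_trans hε₁le (min_le_left _ _)
    calc ε₁ * C₀ ≤ (Tc / C₀) * C₀ := by nlinarith
    _ = Tc := by field_simp
  have hεhalf : ε₁ ≤ 1/2 := le_trans hε₁le (min_le_right _ _)
  refine ⟨4 * Real.exp (ε₁ * C₀ / R + ε₁ ^ 2 / (4 * R * Tc)), by positivity, ?_⟩
  intro ρ T u hρ hT hρ1 hu hT1 hT2 v
  have hT1' : ε₁ ≤ (T - Tc) * C₀ := (div_le_iff₀ hC₀0).mp hT1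
  have hTge : Tc < T := by nlinarith [div_pos hε₁ hC₀0]
  have hTle : T ≤ 2 * Tc := by nlinarith
  have hρlow : 1/2 ≤ ρ := by
    have := abs_le.mp hρ1
    linarith [this.1]
  set x := ‖v‖ with hxdef
  set w := ‖v - u‖ with hwdef
  have hx : 0 ≤ x := norm_nonneg _
  have hw0 : 0 ≤ w := norm_nonneg _
  have hwx : w ≤ x + ε₁ := le_trans (norm_sub_le v u) (by linarith)
  have hQ : (0:ℝ) < 2 * π * R * T := by positivity
  have hQc : (0:ℝ) < 2 * π * R * Tc := by positivity
  -- express both Maxwellians as exponentials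
  have hM : maxwellian R ρ T u v
      = Real.exp (Real.log ρ - Real.log (2*π*R*T) * ((3:ℝ)/2) + -w^2/(2*R*T)) := by
    rw [maxwellian, Real.exp_add, Real.exp_sub, Real.exp_log hρ,
      ← Real.rpow_def_of_pos hQ, ← hwdef]
  have hmu : muG R Tc v
      = Real.exp (Real.log (2*π*R*Tc) * (-(3:ℝ)/2) + -x^2/(2*R*Tc)) := by
    rw [muG, Real.exp_add, ← Real.rpow_def_of_pos hQc, ← hxdef]
  -- the exponent inequality (polynomial part)
  have h1 : w^2 ≤ (x + ε₁)^2 := by nlinarith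
  have hT0 : 0 ≤ 16*C₀^2*ε₁*T*Tc^2 + 4*C₀*ε₁^2*T*Tc - ε₁*T*x^2
      - 4*C₀*Tc^2*w^2 + 4*C₀*T*Tc*x^2 := by
    have a1 : (0:ℝ) ≤ 4*C₀*Tc^2 * ((x + ε₁)^2 - w^2) :=
      mul_nonneg (by positivity) (sub_nonneg.mpr h1)
    have a2 : (0:ℝ) ≤ 4*Tc*x^2 * (T*C₀ - Tc*C₀ - ε₁) :=
      mul_nonneg (by positivity) (by linarith)
    have a3 : (0:ℝ) ≤ ε₁*x^2 * (2*Tc - T) :=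
      mul_nonneg (by positivity) (by linarith)
    have a4 : (0:ℝ) ≤ 4*C₀*ε₁^2*Tc * (T - Tc) :=
      mul_nonneg (by positivity) (by linarith)
    have a5 : (0:ℝ) ≤ 16*C₀^2*ε₁*Tc^2 * (T - Tc) :=
      mul_nonneg (by positivity) (by linarith)
    have a6 : (0:ℝ) ≤ 2*ε₁*Tc * (x - 2*C₀*Tc)^2 :=
      mul_nonneg (by positivity) (sq_nonneg _)
    have a7 : (0:ℝ) ≤ 8*ε₁*C₀^2*Tc^3 := by positivity
    linarith [a1, a2, a3, a4, a5, a6, a7]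
  have hpoly : w^2/(4*R*T) - x^2/(4*R*Tc)
      ≤ (ε₁*C₀/R + ε₁^2/(4*R*Tc)) + (-(ε₁*x^2)/(16*C₀*R*Tc^2)) := by
    have heq : (ε₁*C₀/R + ε₁^2/(4*R*Tc)) + (-(ε₁*x^2)/(16*C₀*R*Tc^2))
        - (w^2/(4*R*T) - x^2/(4*R*Tc))
        = (16*C₀^2*ε₁*T*Tc^2 + 4*C₀*ε₁^2*T*Tc - ε₁*T*x^2
          - 4*C₀*Tc^2*w^2 + 4*C₀*T*Tc*x^2) / (16*C₀*R*T*Tc^2) := by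
      field_simp
      ring
    have h2 : (0:ℝ) ≤ (16*C₀^2*ε₁*T*Tc^2 + 4*C₀*ε₁^2*T*Tc - ε₁*T*x^2
        - 4*C₀*Tc^2*w^2 + 4*C₀*T*Tc*x^2) / (16*C₀*R*T*Tc^2) :=
      div_nonneg hT0 (by positivity)
    linarith [heq ▸ h2]
  -- log bounds
  have e1 : Real.log (2*π*R*T) = Real.log (2*π*R) + Real.log T :=
    Real.log_mul (by positivity) hT.ne'
  have e2 : Real.log (2*π*R*Tc) = Real.log (2*π*R) + Real.log Tc :=
    Real.log_mul (by positivity) hTc.ne'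
  have c1 : -Real.log 2 ≤ Real.log ρ := by
    have := Real.log_le_log (by norm_num : (0:ℝ) < 1/2) hρlow
    rw [show (1:ℝ)/2 = 2⁻¹ by norm_num, Real.log_inv] at this
    linarith
  have c2 : Real.log T ≤ Real.log 2 + Real.log Tc := by
    have := Real.log_le_log hT hTle
    rwa [Real.log_mul two_ne_zero hTc.ne'] at this
  have hlog2 : (0:ℝ) ≤ Real.log 2 := Real.log_nonneg one_le_two
  have hlog4 : Real.log 4 = 2 * Real.log 2 := by
    rw [show (4:ℝ) = 2^(2:ℕ) by norm_num, Real.log_pow]; norm_num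
  -- main log inequality
  have hL : (Real.log ρ - Real.log (2*π*R*T) * ((3:ℝ)/2) + -w^2/(2*R*T)) * (-(1:ℝ)/2)
      + (Real.log (2*π*R*Tc) * (-(3:ℝ)/2) + -x^2/(2*R*Tc)) * ((1:ℝ)/2)
      ≤ Real.log 4 + (ε₁*C₀/R + ε₁^2/(4*R*Tc)) + (-(ε₁*x^2)/(16*C₀*R*Tc^2)) := by
    have hpoly' : (-w^2/(2*R*T)) * (-(1:ℝ)/2) + (-x^2/(2*R*Tc)) * ((1:ℝ)/2)
        ≤ ε₁*C₀/R + ε₁^2/(4*R*Tc) + -(ε₁*x^2)/(16*C₀*R*Tc^2) := by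
      have heq2 : (-w^2/(2*R*T)) * (-(1:ℝ)/2) + (-x^2/(2*R*Tc)) * ((1:ℝ)/2)
          = w^2/(4*R*T) - x^2/(4*R*Tc) := by ring
      rw [heq2]
      linarith [hpoly]
    rw [e1, e2, hlog4]
    linarith [hpoly', c1, c2, hlog2]
  -- conclude
  rw [hM, hmu, ← Real.exp_mul, ← Real.exp_mul, ← Real.exp_add]
  calc Real.exp ((Real.log ρ - Real.log (2*π*R*T) * ((3:ℝ)/2) + -w^2/(2*R*T)) * (-(1:ℝ)/2)
        + (Real.log (2*π*R*Tc) * (-(3:ℝ)/2) + -x^2/(2*R*Tc)) * ((1:ℝ)/2))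
      ≤ Real.exp (Real.log 4 + (ε₁*C₀/R + ε₁^2/(4*R*Tc)) + (-(ε₁*x^2)/(16*C₀*R*Tc^2))) :=
        Real.exp_le_exp.mpr hL
    _ = 4 * Real.exp (ε₁*C₀/R + ε₁^2/(4*R*Tc)) * Real.exp (-(ε₁*x^2)/(16*C₀*R*Tc^2)) := by
        rw [Real.exp_add, Real.exp_add, Real.exp_log (by norm_num : (0:ℝ) < 4)]
end
end

section
/- Let R > 0 and T_c > 0. There exist ε₁* > 0 and C > 0 (depending only on R and T_c) such that for every ε₁ ∈ (0, ε₁*] and all ρ > 0, u ∈ ℝ³, T > 0 with |ρ − 1| + |u| + |T − T_c| ≤ ε₁, one has |M_{[ρ,u,T]}(v) − μ(v)| ≤ C·ε₁·μ(v)^{5/6} for every v ∈ ℝ³. -/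
open MeasureTheory Real

noncomputable section

/-!
Write `M_{[ρ,u,T]} - μ` as a telescoping sum of three changes: of the density, of the
temperature, and of the mean velocity. By the mean value inequality for `exp` and the Lipschitz
continuity of `T ↦ (2πRT)^{-3/2}` and `T ↦ 1/(2RT)` near `T_c`, each change is at most `ε₁`
times `(1 + |v|²) exp(-m / (2R T₁))`, where `T₁ = (21/20) T_c` bounds the temperature and
`m = min(|v-u|², |v|²) ≥ (11/12)|v|² - 1/6`. Since `(11/12)(20/21) > 5/6`, the slack in the
Gaussian rate absorbs the factor `1 + |v|²`, leaving the envelope `μ^{5/6}`.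
-/

open Set

lemma exp_neg_sub_exp_neg_le (x y : ℝ) :
    exp (-x) - exp (-y) ≤ (y - x) * exp (-x) := by
  have h : exp (-y) = exp (-x) * exp (x - y) := by rw [← exp_add]; ring_nf
  nlinarith [add_one_le_exp (x - y), exp_pos (-x)]

lemma abs_exp_neg_sub_exp_neg_le {x y m : ℝ} (hx : m ≤ x) (hy : m ≤ y) :
    |exp (-x) - exp (-y)| ≤ |x - y| * exp (-m) := by
  wlog hxy : x ≤ y generalizing x y
  · rw [abs_sub_comm, abs_sub_comm x]; exact this hy hx (le_of_not_ge hxy)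
  rw [abs_of_nonneg (by simpa using exp_le_exp.2 (neg_le_neg hxy)), abs_sub_comm,
    abs_of_nonneg (sub_nonneg.2 hxy)]
  exact (exp_neg_sub_exp_neg_le x y).trans
    (mul_le_mul_of_nonneg_left (exp_le_exp.2 (neg_le_neg hx)) (sub_nonneg.2 hxy))

lemma one_add_mul_exp_neg_le {l c b : ℝ} (hlc : l < c) (hb : 0 ≤ b) :
    (1 + b) * exp (-(c * b)) ≤ (1 + 1 / (c - l)) * exp (-(l * b)) := by
  have hd : 0 < c - l := sub_pos.2 hlc
  have hsplit : exp (-(c * b)) = exp (-((c - l) * b)) * exp (-(l * b)) := by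
    rw [← exp_add]; ring_nf
  have hdecay : exp (-((c - l) * b)) ≤ 1 := exp_le_one_iff.2 (by nlinarith)
  have hpoly : b * exp (-((c - l) * b)) ≤ 1 / (c - l) := by
    rw [le_div_iff₀ hd]
    have := mul_exp_neg_le_exp_neg_one ((c - l) * b)
    nlinarith [exp_le_one_iff.2 (neg_nonpos.2 (zero_le_one' ℝ))]
  rw [hsplit, ← mul_assoc]
  refine mul_le_mul_of_nonneg_right ?_ (exp_pos _).le
  linarith

lemma abs_norm_sub_sq_sub_norm_sq_le {E : Type*} [SeminormedAddCommGroup E] {u : E} {ε : ℝ}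
    (hu : ‖u‖ ≤ ε) (hε : ε ≤ 1) (v : E) :
    |‖v - u‖ ^ 2 - ‖v‖ ^ 2| ≤ ε * (‖v‖ ^ 2 + 2) := by
  have hdiff : |‖v - u‖ - ‖v‖| ≤ ‖u‖ := by
    simpa using abs_norm_sub_norm_le (v - u) v
  have hsum : ‖v - u‖ + ‖v‖ ≤ 2 * ‖v‖ + ‖u‖ := by linarith [norm_sub_le v u]
  rw [sq_sub_sq, abs_mul, abs_of_nonneg (by positivity : 0 ≤ ‖v - u‖ + ‖v‖), mul_comm]
  have hv : 2 * ‖v‖ + ‖u‖ ≤ ‖v‖ ^ 2 + 2 := by nlinarith [sq_nonneg (‖v‖ - 1)]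
  exact mul_le_mul (hdiff.trans hu) (hsum.trans hv) (by positivity) ((norm_nonneg u).trans hu)

def maxwellProfile (R T x : ℝ) : ℝ :=
  1 / (2 * π * R * T) ^ ((3 : ℝ) / 2) * exp (-(x / (2 * R * T)))

lemma maxwellian_eq (R ρ T : ℝ) (u v : E3) :
    maxwellian R ρ T u v = ρ * maxwellProfile R T (‖v - u‖ ^ 2) := by
  rw [maxwellian, maxwellProfile, neg_div]; ring

lemma muG_eq {R Tc : ℝ} (hR : 0 ≤ R) (hTc : 0 ≤ Tc) (v : E3) :
    muG R Tc v = maxwellProfile R Tc (‖v‖ ^ 2) := by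
  rw [muG, maxwellProfile, neg_div, neg_div, rpow_neg (by positivity), one_div]

section
variable {R T₀ T₁ : ℝ}

lemma maxwellProfile_nonneg (hR : 0 ≤ R) {T : ℝ} (hT : 0 ≤ T) (x : ℝ) :
    0 ≤ maxwellProfile R T x := by
  unfold maxwellProfile; positivity

lemma div_two_mul_le_of_mem_Icc (hR : 0 < R) (hT₀ : 0 < T₀) {T x : ℝ}
    (hT : T ∈ Icc T₀ T₁) (hx : 0 ≤ x) : x / (2 * R * T₁) ≤ x / (2 * R * T) := by
  have := hT₀.trans_le hT.1
  exact div_le_div_of_nonneg_left hx (by positivity) (by gcongr; exact hT.2)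

lemma maxwellProfile_le (hR : 0 < R) (hT₀ : 0 < T₀) {T x : ℝ} (hT : T ∈ Icc T₀ T₁)
    (hx : 0 ≤ x) :
    maxwellProfile R T x ≤
      1 / (2 * π * R * T₀) ^ ((3 : ℝ) / 2) * exp (-(x / (2 * R * T₁))) := by
  have := hT₀.trans_le hT.1
  apply mul_le_mul _ _ (exp_pos _).le (by positivity)
  · gcongr; exact hT.1
  · exact exp_le_exp.2 (neg_le_neg (div_two_mul_le_of_mem_Icc hR hT₀ hT hx))

lemma abs_maxwellProfile_sub_le (hR : 0 < R) {T x y m : ℝ} (hT : 0 < T) (hx : m ≤ x)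
    (hy : m ≤ y) :
    |maxwellProfile R T x - maxwellProfile R T y| ≤
      |x - y| / (2 * R * T) * maxwellProfile R T m := by
  have hs : 0 < 2 * R * T := by positivity
  have hexp := abs_exp_neg_sub_exp_neg_le (div_le_div_of_nonneg_right hx hs.le)
    (div_le_div_of_nonneg_right hy hs.le)
  rw [← sub_div, abs_div, abs_of_pos hs] at hexp
  rw [maxwellProfile, maxwellProfile, maxwellProfile, ← mul_sub, abs_mul,
    abs_of_nonneg (by positivity : (0 : ℝ) ≤ 1 / (2 * π * R * T) ^ ((3 : ℝ) / 2)),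
    mul_left_comm]
  gcongr

lemma abs_maxwellProfile_norm_sub_sq_sub_le {E : Type*} [SeminormedAddCommGroup E]
    (hR : 0 < R) (hT₀ : 0 < T₀) {T ε : ℝ} (hT : T ∈ Icc T₀ T₁) {u : E} (hu : ‖u‖ ≤ ε)
    (hε : ε ≤ 1) (v : E) :
    |maxwellProfile R T (‖v - u‖ ^ 2) - maxwellProfile R T (‖v‖ ^ 2)| ≤
      ε * (‖v‖ ^ 2 + 2) / (2 * R * T) * (1 / (2 * π * R * T₀) ^ ((3 : ℝ) / 2) *
        exp (-(min (‖v - u‖ ^ 2) (‖v‖ ^ 2) / (2 * R * T₁)))) := by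
  have hT0 := hT₀.trans_le hT.1
  have hε0 := (norm_nonneg u).trans hu
  refine (abs_maxwellProfile_sub_le hR hT0 (min_le_left _ _) (min_le_right _ _)).trans ?_
  exact mul_le_mul
    (div_le_div_of_nonneg_right (abs_norm_sub_sq_sub_norm_sq_le hu hε v) (by positivity))
    (maxwellProfile_le hR hT₀ hT (le_min (by positivity) (by positivity)))
    (maxwellProfile_nonneg hR.le (by positivity) _) (by positivity)

lemma abs_exp_neg_div_sub_exp_neg_div_le (hR : 0 < R) (hT₀ : 0 < T₀) {T T' x : ℝ}
    (hT : T ∈ Icc T₀ T₁) (hT' : T' ∈ Icc T₀ T₁) (hx : 0 ≤ x) :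
    |exp (-(x / (2 * R * T))) - exp (-(x / (2 * R * T')))| ≤
      x * |1 / (2 * R * T) - 1 / (2 * R * T')| * exp (-(x / (2 * R * T₁))) := by
  refine (abs_exp_neg_sub_exp_neg_le (div_two_mul_le_of_mem_Icc hR hT₀ hT hx)
    (div_two_mul_le_of_mem_Icc hR hT₀ hT' hx)).trans_eq ?_
  rw [show x / (2 * R * T) - x / (2 * R * T') = x * (1 / (2 * R * T) - 1 / (2 * R * T')) by ring,
    abs_mul, abs_of_nonneg hx]

lemma exists_lipschitzOnWith_one_div_mul_rpow {c : ℝ} (hc : 0 < c) (hT₀ : 0 < T₀) (p : ℝ) :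
    ∃ K, LipschitzOnWith K (fun T : ℝ => 1 / (c * T) ^ p) (Icc T₀ T₁) := by
  refine ContDiffOn.exists_lipschitzOnWith (n := 1) (fun T hT => ?_) one_ne_zero
    (convex_Icc _ _) isCompact_Icc
  have : 0 < T := hT₀.trans_le hT.1
  apply ContDiffAt.contDiffWithinAt
  fun_prop (disch := positivity)

lemma exists_abs_maxwellProfile_sub_le_mul_abs_sub (hR : 0 < R) (hT₀ : 0 < T₀) :
    ∃ K ≥ 0, ∀ T ∈ Icc T₀ T₁, ∀ T' ∈ Icc T₀ T₁, ∀ x, 0 ≤ x →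
      |maxwellProfile R T x - maxwellProfile R T' x| ≤
        K * |T - T'| * (1 + x) * exp (-(x / (2 * R * T₁))) := by
  obtain ⟨LP, hLP⟩ := exists_lipschitzOnWith_one_div_mul_rpow (T₁ := T₁)
    (by positivity : 0 < 2 * π * R) hT₀ ((3 : ℝ) / 2)
  obtain ⟨Lβ, hLβ⟩ := exists_lipschitzOnWith_one_div_mul_rpow (T₁ := T₁)
    (by positivity : 0 < 2 * R) hT₀ 1
  simp only [rpow_one] at hLβ
  refine ⟨LP + 1 / (2 * π * R * T₀) ^ ((3 : ℝ) / 2) * Lβ, by positivity,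
    fun T hT T' hT' x hx => ?_⟩
  have hP := hLP.dist_le_mul T hT T' hT'
  have hβ := hLβ.dist_le_mul T hT T' hT'
  simp only [Real.dist_eq] at hP hβ
  have := hT₀.trans_le hT'.1
  have hP'0 : 0 ≤ 1 / (2 * π * R * T') ^ ((3 : ℝ) / 2) := by positivity
  have hP'G₀ :
      1 / (2 * π * R * T') ^ ((3 : ℝ) / 2) ≤ 1 / (2 * π * R * T₀) ^ ((3 : ℝ) / 2) := by
    gcongr; exact hT'.1
  have heE := exp_le_exp.2 (neg_le_neg (div_two_mul_le_of_mem_Icc hR hT₀ hT hx))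
  have hexp := abs_exp_neg_div_sub_exp_neg_div_le hR hT₀ hT hT' hx
  rw [maxwellProfile, maxwellProfile]
  set P := 1 / (2 * π * R * T) ^ ((3 : ℝ) / 2)
  set P' := 1 / (2 * π * R * T') ^ ((3 : ℝ) / 2)
  set e := exp (-(x / (2 * R * T)))
  set e' := exp (-(x / (2 * R * T')))
  set E := exp (-(x / (2 * R * T₁)))
  set G₀ := 1 / (2 * π * R * T₀) ^ ((3 : ℝ) / 2)
  calc |P * e - P' * e'| = |(P - P') * e + P' * (e - e')| := by ring_nf
    _ ≤ LP * |T - T'| * E + G₀ * (x * (Lβ * |T - T'|) * E) := by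
      refine (abs_add_le _ _).trans ?_
      rw [abs_mul, abs_mul, abs_of_pos (exp_pos _), abs_of_nonneg hP'0]
      gcongr
      exact hexp.trans (by gcongr)
    _ ≤ _ := by
      have : 0 ≤ LP * |T - T'| * x * E + G₀ * Lβ * |T - T'| * E := by positivity
      linear_combination this

end

lemma exists_abs_maxwellian_sub_muG_le {R Tc T₀ T₁ : ℝ} (hR : 0 < R) (hT₀ : 0 < T₀)
    (hTc : Tc ∈ Icc T₀ T₁) :
    ∃ K > 0, ∀ ε ≤ 1, ∀ ρ, ∀ T ∈ Icc T₀ T₁, ∀ u v,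
      |ρ - 1| ≤ ε → ‖u‖ ≤ ε → |T - Tc| ≤ ε →
      |maxwellian R ρ T u v - muG R Tc v| ≤
        K * ε * (1 + ‖v‖ ^ 2) * exp (-(min (‖v - u‖ ^ 2) (‖v‖ ^ 2) / (2 * R * T₁))) := by
  obtain ⟨KT, hKT0, hKT⟩ :=
    exists_abs_maxwellProfile_sub_le_mul_abs_sub (T₁ := T₁) hR hT₀
  set G₀ := 1 / (2 * π * R * T₀) ^ ((3 : ℝ) / 2)
  have hTc0 : 0 < Tc := hT₀.trans_le hTc.1
  have hT₁ : 0 < T₁ := hTc0.trans_le hTc.2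
  refine ⟨G₀ + 3 * KT + G₀ / (R * Tc), by positivity,
    fun ε hε ρ T hT u v hρ hu hTT => ?_⟩
  rw [maxwellian_eq, muG_eq hR.le hTc0.le]
  set a := ‖v - u‖ ^ 2
  set b := ‖v‖ ^ 2
  set E := exp (-(min a b / (2 * R * T₁)))
  have hab : |a - b| ≤ ε * (b + 2) := abs_norm_sub_sq_sub_norm_sq_le hu hε v
  have hb0 : 0 ≤ b := by positivity
  have hε0 : 0 ≤ ε := (abs_nonneg _).trans hρ
  have hEa : exp (-(a / (2 * R * T₁))) ≤ E :=
    exp_le_exp.2 (neg_le_neg (div_le_div_of_nonneg_right (min_le_left a b) (by positivity)))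
  have hdensity : |(ρ - 1) * maxwellProfile R T a| ≤ ε * (G₀ * E) := by
    have hg0 := maxwellProfile_nonneg hR.le (hT₀.trans_le hT.1).le a
    rw [abs_mul, abs_of_nonneg hg0]
    exact mul_le_mul hρ ((maxwellProfile_le hR hT₀ hT (by positivity)).trans (by gcongr))
      hg0 hε0
  have htemperature :
      |maxwellProfile R T a - maxwellProfile R Tc a| ≤ KT * ε * (3 * (1 + b)) * E := by
    refine (hKT T hT Tc hTc a (by positivity)).trans ?_
    have : 1 + a ≤ 3 * (1 + b) := by
      nlinarith [(abs_le.1 hab).2, mul_le_mul_of_nonneg_right hε (by positivity : 0 ≤ b + 2)]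
    gcongr
  have hvelocity := abs_maxwellProfile_norm_sub_sq_sub_le hR hT₀ hTc hu hε v
  calc |ρ * maxwellProfile R T a - maxwellProfile R Tc b|
      = |(ρ - 1) * maxwellProfile R T a + (maxwellProfile R T a - maxwellProfile R Tc a) +
          (maxwellProfile R Tc a - maxwellProfile R Tc b)| := by ring_nf
    _ ≤ ε * (G₀ * E) + KT * ε * (3 * (1 + b)) * E +
          ε * (b + 2) / (2 * R * Tc) * (G₀ * E) :=
      (abs_add_three _ _ _).trans (by gcongr)
    _ ≤ _ := by
      have : 0 ≤ ε * G₀ * E * b + ε * G₀ * E * b / (2 * R * Tc) := by positivity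
      linear_combination this

lemma muG_rpow {R Tc : ℝ} (hR : 0 ≤ R) (hTc : 0 ≤ Tc) (p : ℝ) (v : E3) :
    muG R Tc v ^ p =
      (2 * π * R * Tc) ^ (-(3 : ℝ) / 2 * p) * exp (-(p * (‖v‖ ^ 2 / (2 * R * Tc)))) := by
  rw [muG, mul_rpow (by positivity) (exp_pos _).le, ← rpow_mul (by positivity), ← exp_mul]
  congr 2; ring

lemma exists_gaussian_envelope_le_muG_rpow {R Tc : ℝ} (hR : 0 < R) (hTc : 0 < Tc) :
    ∃ C > 0, ∀ u v : E3, ‖u‖ ≤ 1 / 12 →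
      (1 + ‖v‖ ^ 2) * exp (-(min (‖v - u‖ ^ 2) (‖v‖ ^ 2) / (2 * R * (21 / 20 * Tc))))
        ≤ C * muG R Tc v ^ ((5 : ℝ) / 6) := by
  set D := 2 * R * (21 / 20 * Tc) with hD
  set c := 11 / 12 / D with hc
  set l := 5 / 6 / (2 * R * Tc) with hl
  have hlc : l < c := by
    rw [hl, hc, hD, div_lt_div_iff₀ (by positivity) (by positivity)]
    nlinarith [mul_pos hR hTc]
  refine ⟨exp (1 / 6 / D) * (1 + 1 / (c - l)) * (2 * π * R * Tc) ^ ((5 : ℝ) / 4),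
    by have := sub_pos.2 hlc; positivity, fun u v hu => ?_⟩
  have hmin : 11 / 12 * ‖v‖ ^ 2 - 1 / 6 ≤ min (‖v - u‖ ^ 2) (‖v‖ ^ 2) := by
    have := abs_le.1 (abs_norm_sub_sq_sub_norm_sq_le hu (by norm_num) v)
    refine le_min ?_ ?_ <;> nlinarith [sq_nonneg ‖v‖]
  have hrate :
      exp (-(min (‖v - u‖ ^ 2) (‖v‖ ^ 2) / D)) ≤ exp (1 / 6 / D) * exp (-(c * ‖v‖ ^ 2)) := by
    rw [← exp_add, exp_le_exp]
    have hcb : c * ‖v‖ ^ 2 - 1 / 6 / D = (11 / 12 * ‖v‖ ^ 2 - 1 / 6) / D := by rw [hc]; ring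
    linarith [div_le_div_of_nonneg_right hmin (by positivity : 0 ≤ D)]
  have hpow :
      (2 * π * R * Tc) ^ ((5 : ℝ) / 4) * (2 * π * R * Tc) ^ (-(3 : ℝ) / 2 * (5 / 6)) = 1 := by
    rw [← rpow_add (by positivity)]; norm_num
  calc _ ≤ exp (1 / 6 / D) * ((1 + ‖v‖ ^ 2) * exp (-(c * ‖v‖ ^ 2))) := by
        rw [mul_left_comm]; gcongr
    _ ≤ exp (1 / 6 / D) * ((1 + 1 / (c - l)) * exp (-(l * ‖v‖ ^ 2))) :=
        mul_le_mul_of_nonneg_left (one_add_mul_exp_neg_le hlc (by positivity)) (exp_pos _).le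
    _ = _ := by
        rw [muG_rpow hR.le hTc.le,
          show (5 : ℝ) / 6 * (‖v‖ ^ 2 / (2 * R * Tc)) = l * ‖v‖ ^ 2 by rw [hl]; ring]
        linear_combination
          (-(exp (1 / 6 / D) * (1 + 1 / (c - l)) * exp (-(l * ‖v‖ ^ 2)))) * hpow

/-- Mean-value estimate comparing the local and global Maxwellians:
`|M - μ| ≤ C ε₁ μ^{5/6}`. -/
theorem maxwellian_difference_bound (R Tc : ℝ) (hR : 0 < R) (hTc : 0 < Tc) :
    ∃ εs > 0, ∃ C > 0, ∀ ε₁ : ℝ, 0 < ε₁ → ε₁ ≤ εs →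
      ∀ (ρ T : ℝ) (u : E3), 0 < ρ → 0 < T →
        |ρ - 1| + ‖u‖ + |T - Tc| ≤ ε₁ →
        ∀ v : E3, |maxwellian R ρ T u v - muG R Tc v| ≤ C * ε₁ * (muG R Tc v) ^ ((5 : ℝ) / 6) := by
  obtain ⟨K, hK, hbound⟩ := exists_abs_maxwellian_sub_muG_le (Tc := Tc) (T₀ := Tc / 2)
    (T₁ := 21 / 20 * Tc) hR (by positivity) ⟨by linarith, by linarith⟩
  obtain ⟨C, hC, henvelope⟩ := exists_gaussian_envelope_le_muG_rpow hR hTc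
  refine ⟨min (1 / 12) (Tc / 20), by positivity, K * C, by positivity,
    fun ε hε hεs ρ T u _ _ hsum v => ?_⟩
  have hε₁ : ε ≤ 1 / 12 := hεs.trans (min_le_left _ _)
  have hεT : ε ≤ Tc / 20 := hεs.trans (min_le_right _ _)
  have hρ : |ρ - 1| ≤ ε := by linarith [norm_nonneg u, abs_nonneg (T - Tc)]
  have hu : ‖u‖ ≤ ε := by linarith [abs_nonneg (ρ - 1), abs_nonneg (T - Tc)]
  have hTT : |T - Tc| ≤ ε := by linarith [norm_nonneg u, abs_nonneg (ρ - 1)]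
  have hT : T ∈ Icc (Tc / 2) (21 / 20 * Tc) := by
    constructor <;> linarith [(abs_le.1 hTT).1, (abs_le.1 hTT).2]
  calc _ ≤ K * ε * ((1 + ‖v‖ ^ 2) *
          exp (-(min (‖v - u‖ ^ 2) (‖v‖ ^ 2) / (2 * R * (21 / 20 * Tc))))) := by
        rw [← mul_assoc]; exact hbound ε (by linarith) ρ T hT u v hρ hu hTT
    _ ≤ K * ε * (C * muG R Tc v ^ ((5 : ℝ) / 6)) :=
        mul_le_mul_of_nonneg_left (henvelope u v (hu.trans hε₁)) (by positivity)
    _ = _ := by ring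
end
end
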